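/- arXiv:1503.05341 — 4 statements merged into one kernel-verified Lean document; each statement's English description precedes it below -/
import Mathlib

section
/- Any Baer subplane B of PG(2,q²) meets a unital U of PG(2,q²) in at most 2q+2 points, and if the unique tangent line of U at some point P ∈ U ∩ B meets B in q+1 points then |U ∩ B| ≤ 2q+1. -/
/-- Points of `PG(2, q²)`: the projective plane over a field `K` with `q²` elements. -/
abbrev PGPoint (K : Type*) [Field K] := Projectivization K (Fin 3 → K)

/-- A line of `PG(2, q²)`: a 2-dimensional subspace of `K³`. -/
def IsLine {K : Type*} [Field K] (W : Submodule K (Fin 3 → K)) : Prop :=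
  Module.finrank K W = 2

/-- The set of projective points on a subspace. -/
def linePts {K : Type*} [Field K] (W : Submodule K (Fin 3 → K)) : Set (PGPoint K) :=
  {p | p.submodule ≤ W}

/-- A unital in `PG(2, q²)`: a set of `q³+1` points meeting every line in `1` or `q+1` points. -/
def IsUnital {K : Type*} [Field K] (q : ℕ) (U : Set (PGPoint K)) : Prop :=
  U.ncard = q ^ 3 + 1 ∧
  ∀ W : Submodule K (Fin 3 → K), IsLine W →
    (U ∩ linePts W).ncard = 1 ∨ (U ∩ linePts W).ncard = q + 1

/-- A Baer subplane of `PG(2, q²)`: a set of `q²+q+1` points meeting every line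
in `1` or `q+1` points (a subplane of order `q`). -/
def IsBaerSubplane {K : Type*} [Field K] (q : ℕ) (B : Set (PGPoint K)) : Prop :=
  B.ncard = q ^ 2 + q + 1 ∧
  ∀ W : Submodule K (Fin 3 → K), IsLine W →
    (B ∩ linePts W).ncard = 1 ∨ (B ∩ linePts W).ncard = q + 1

section Aux

open Module

instance {K V : Type*} [Field K] [AddCommGroup V] [Module K V] [Finite V] :
    Finite (Projectivization K V) := Quotient.finite _

lemma card_nonzero {K M : Type*} [Field K] [Fintype K] [AddCommGroup M] [Module K M]
    [Fintype M] [FiniteDimensional K M] [DecidableEq M] :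
    Fintype.card {v : M // v ≠ 0} = Fintype.card K ^ (finrank K M) - 1 := by
  classical
  have h1 : Fintype.card M = Fintype.card K ^ (finrank K M) := by
    simpa using Module.card_fintype (Module.finBasis K M)
  have := Fintype.card_subtype_compl (fun v : M => v = 0)
  simpa [h1, Fintype.card_subtype_eq (0 : M)] using this

/-- Number of 1-dimensional subspaces of a 2-dimensional space over a finite field. -/
lemma card_one_dim_sub {K M : Type*} [Field K] [Fintype K] [AddCommGroup M] [Module K M]
    [Finite M] (hM : finrank K M = 2) :
    Nat.card {H : Submodule K M // finrank K H = 1} = Fintype.card K + 1 := by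
  classical
  cases nonempty_fintype M
  have hfd : FiniteDimensional K M := Module.Finite.of_finite
  set k := Fintype.card K with hk
  have hk2 : 2 ≤ k := Fintype.one_lt_card
  set S1 := {H : Submodule K M // finrank K H = 1} with hS1
  have : Finite S1 := by
    have : Finite (Submodule K M) := inferInstance
    exact Subtype.finite
  cases nonempty_fintype S1
  let f : {v : M // v ≠ 0} → S1 := fun v => ⟨Submodule.span K {v.1}, finrank_span_singleton v.2⟩
  have key : ∀ H : S1, Fintype.card {a // f a = H} = k - 1 := by
    intro H
    have efib : {a // f a = H} ≃ {w : H.1 // w ≠ 0} :=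
      { toFun := fun a => ⟨⟨a.1.1, by
          have : Submodule.span K {a.1.1} = H.1 := congrArg Subtype.val a.2
          rw [← this]; exact Submodule.mem_span_singleton_self _⟩, by
          simp [Submodule.mk_eq_zero, a.1.2]⟩
        invFun := fun w => ⟨⟨w.1.1, fun h => w.2 (Subtype.ext h)⟩, by
          apply Subtype.ext
          apply Submodule.eq_of_le_of_finrank_eq
          · exact (Submodule.span_le).2 (Set.singleton_subset_iff.2 w.1.2)
          · rw [finrank_span_singleton (fun h => w.2 (Subtype.ext h)), H.2]⟩
        left_inv := fun a => by ext; rfl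
        right_inv := fun w => by ext; rfl }
    rw [Fintype.card_congr efib]
    have : FiniteDimensional K H.1 := inferInstance
    simpa [H.2, pow_one] using (card_nonzero (K := K) (M := H.1))
  have tot : Fintype.card {v : M // v ≠ 0} = (Fintype.card S1) * (k - 1) := by
    rw [Fintype.card_congr (Equiv.sigmaFiberEquiv f).symm, Fintype.card_sigma]
    simp [key, Finset.sum_const, mul_comm]
  have lhs : Fintype.card {v : M // v ≠ 0} = k ^ 2 - 1 := by
    simpa [hM] using (card_nonzero (K := K) (M := M))
  rw [lhs] at tot
  have hpos : 0 < k - 1 := by omega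
  have hfac : (k + 1) * (k - 1) = k ^ 2 - 1 := by
    obtain ⟨m, hm⟩ := Nat.exists_eq_add_of_le hk2
    have h1 : 2 + m - 1 = m + 1 := by omega
    have h2 : (2 + m) ^ 2 = m ^ 2 + 4 * m + 4 := by ring
    have h3 : m ^ 2 + 4 * m + 4 - 1 = m ^ 2 + 4 * m + 3 := by omega
    rw [hm, h1, h2, h3]; ring
  rw [Nat.card_eq_fintype_card]
  apply Nat.eq_of_mul_eq_mul_right hpos
  omega

lemma finrank_comap_mkQ {K V : Type*} [Field K] [AddCommGroup V] [Module K V]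
    [FiniteDimensional K V] (L : Submodule K V) (hL : finrank K L = 1)
    (W' : Submodule K (V ⧸ L)) :
    finrank K (Submodule.comap L.mkQ W') = finrank K W' + 1 := by
  set W := Submodule.comap L.mkQ W' with hW
  have hLW : L ≤ W := by
    intro x hx
    simp [hW, Submodule.mem_comap, Submodule.Quotient.mk_eq_zero L |>.2 hx,
      Submodule.mkQ_apply]
  have hmap : Submodule.map L.mkQ W = W' :=
    Submodule.map_comap_eq_self (by rw [Submodule.range_mkQ]; exact le_top)
  have hrn := LinearMap.finrank_range_add_finrank_ker (L.mkQ.domRestrict W)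
  have hrange : LinearMap.range (L.mkQ.domRestrict W) = W' := by
    rw [LinearMap.range_domRestrict, hmap]
  have hker : LinearMap.ker (L.mkQ.domRestrict W) = Submodule.comap W.subtype L := by
    ext x
    simp [LinearMap.mem_ker, Submodule.mem_comap, Submodule.Quotient.mk_eq_zero,
      Submodule.mkQ_apply]
  have hkerrank : finrank K (LinearMap.ker (L.mkQ.domRestrict W)) = 1 := by
    rw [hker, LinearEquiv.finrank_eq (Submodule.comapSubtypeEquivOfLe hLW), hL]
  rw [hrange, hkerrank] at hrn
  omega

lemma card_lines_through' {K : Type*} [Field K] [Fintype K]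
    (L : Submodule K (Fin 3 → K)) (hL : finrank K L = 1) :
    Nat.card {W : Submodule K (Fin 3 → K) // IsLine W ∧ L ≤ W} = Fintype.card K + 1 := by
  classical
  have hV : finrank K (Fin 3 → K) = 3 := by simp
  have hfin : Finite ((Fin 3 → K) ⧸ L) := Finite.of_surjective _ (Submodule.mkQ_surjective L)
  have hq : finrank K ((Fin 3 → K) ⧸ L) = 2 := by
    have := Submodule.finrank_quotient_add_finrank L
    rw [hV, hL] at this; omega
  have finrank_comap : ∀ W' : Submodule K ((Fin 3 → K) ⧸ L),
      finrank K (Submodule.comap L.mkQ W') = finrank K W' + 1 :=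
    finrank_comap_mkQ L hL
  let e : {W' : Submodule K ((Fin 3 → K) ⧸ L) // finrank K W' = 1} ≃
      {W : Submodule K (Fin 3 → K) // IsLine W ∧ L ≤ W} :=
    { toFun := fun W' => ⟨Submodule.comap L.mkQ W'.1,
        by rw [IsLine, finrank_comap, W'.2],
        fun x hx => by
          simp [Submodule.mem_comap, Submodule.mkQ_apply,
            (Submodule.Quotient.mk_eq_zero L).2 hx]⟩
      invFun := fun W => ⟨Submodule.map L.mkQ W.1, by
        have : Submodule.comap L.mkQ (Submodule.map L.mkQ W.1) = W.1 := by
          rw [Submodule.comap_map_eq, Submodule.ker_mkQ, sup_eq_left.2 W.2.2]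
        have h2 := finrank_comap (Submodule.map L.mkQ W.1)
        rw [this] at h2
        have := W.2.1
        rw [IsLine] at this
        omega⟩
      left_inv := fun W' => by
        apply Subtype.ext
        exact Submodule.map_comap_eq_self (by rw [Submodule.range_mkQ]; exact le_top)
      right_inv := fun W => by
        apply Subtype.ext
        show Submodule.comap L.mkQ (Submodule.map L.mkQ W.1) = W.1
        rw [Submodule.comap_map_eq, Submodule.ker_mkQ, sup_eq_left.2 W.2.2] }
  rw [← Nat.card_congr e]
  exact card_one_dim_sub hq

variable {K : Type*} [Field K] [Fintype K]

lemma mem_linePts_iff {W : Submodule K (Fin 3 → K)} {p : PGPoint K} :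
    p ∈ linePts W ↔ p.submodule ≤ W := Iff.rfl

lemma existsUnique_line {p r : PGPoint K} (h : p ≠ r) :
    ∃! W : Submodule K (Fin 3 → K), IsLine W ∧ p ∈ linePts W ∧ r ∈ linePts W := by
  have hsub : p.submodule ≠ r.submodule := fun he => h (Projectivization.submodule_injective he)
  have hp1 : Module.finrank K p.submodule = 1 := p.finrank_submodule
  have hr1 : Module.finrank K r.submodule = 1 := r.finrank_submodule
  have hinf : Module.finrank K (p.submodule ⊓ r.submodule : Submodule K (Fin 3 → K)) = 0 := by
    by_contra h0
    have hle : Module.finrank K (p.submodule ⊓ r.submodule : Submodule K (Fin 3 → K)) ≤ 1 := by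
      rw [← hp1]
      exact Submodule.finrank_mono inf_le_left
    have h1 : Module.finrank K (p.submodule ⊓ r.submodule : Submodule K (Fin 3 → K)) = 1 := by
      omega
    have e1 : p.submodule ⊓ r.submodule = p.submodule :=
      Submodule.eq_of_le_of_finrank_eq inf_le_left (by rw [h1, hp1])
    have e2 : p.submodule ⊓ r.submodule = r.submodule :=
      Submodule.eq_of_le_of_finrank_eq inf_le_right (by rw [h1, hr1])
    exact hsub (e1 ▸ e2)
  have hsup : IsLine (p.submodule ⊔ r.submodule) := by
    rw [IsLine]
    have := Submodule.finrank_sup_add_finrank_inf_eq p.submodule r.submodule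
    rw [hp1, hr1, hinf] at this
    omega
  refine ⟨p.submodule ⊔ r.submodule, ⟨hsup, mem_linePts_iff.2 le_sup_left,
    mem_linePts_iff.2 le_sup_right⟩, ?_⟩
  rintro W ⟨hW, hpW, hrW⟩
  exact (Submodule.eq_of_le_of_finrank_eq (sup_le (mem_linePts_iff.1 hpW) (mem_linePts_iff.1 hrW))
    (by rw [hsup, hW])).symm

lemma lines_through_ncard (p : PGPoint K) :
    {W : Submodule K (Fin 3 → K) | IsLine W ∧ p ∈ linePts W}.ncard = Fintype.card K + 1 := by
  rw [← Nat.card_coe_set_eq]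
  exact card_lines_through' p.submodule p.finrank_submodule

open scoped Classical in
lemma incidence_sum (S : Set (Submodule K (Fin 3 → K))) (X : Set (PGPoint K)) :
    ∑ W ∈ S.toFinite.toFinset, (X ∩ linePts W).ncard
      = ∑ x ∈ X.toFinite.toFinset, {W | W ∈ S ∧ x ∈ linePts W}.ncard := by
  classical
  calc ∑ W ∈ S.toFinite.toFinset, (X ∩ linePts W).ncard
      = ∑ W ∈ S.toFinite.toFinset, ∑ x ∈ X.toFinite.toFinset,
          (if x ∈ linePts W then 1 else 0) := by
        refine Finset.sum_congr rfl fun W _ => ?_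
        rw [Set.ncard_eq_toFinset_card (X ∩ linePts W) ((X ∩ linePts W).toFinite),
          ← Finset.card_filter]
        congr 1
        ext x
        simp [Set.Finite.mem_toFinset]
    _ = ∑ x ∈ X.toFinite.toFinset, ∑ W ∈ S.toFinite.toFinset,
          (if x ∈ linePts W then 1 else 0) := Finset.sum_comm
    _ = ∑ x ∈ X.toFinite.toFinset, {W | W ∈ S ∧ x ∈ linePts W}.ncard := by
        refine Finset.sum_congr rfl fun x _ => ?_
        rw [Set.ncard_eq_toFinset_card {W | W ∈ S ∧ x ∈ linePts W}
          ({W | W ∈ S ∧ x ∈ linePts W}.toFinite), ← Finset.card_filter]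
        congr 1
        ext W
        simp [Set.Finite.mem_toFinset, Set.mem_setOf_eq]

open scoped Classical in
lemma count_secants_through (q : ℕ) (hq : 2 ≤ q) (hcard : Fintype.card K = q ^ 2)
    (X : Set (PGPoint K))
    (hX : ∀ W, IsLine W → (X ∩ linePts W).ncard = 1 ∨ (X ∩ linePts W).ncard = q + 1)
    (p : PGPoint K) :
    q * {W | (IsLine W ∧ p ∈ linePts W) ∧ (X ∩ linePts W).ncard = q + 1}.ncard + (q ^ 2 + 1)
      = X.ncard + (if p ∈ X then q ^ 2 else 0) := by
  classical
  set S := {W : Submodule K (Fin 3 → K) | IsLine W ∧ p ∈ linePts W} with hS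
  have hinc := incidence_sum S X
  -- line side
  have hline : ∑ W ∈ S.toFinite.toFinset, (X ∩ linePts W).ncard
      = q * {W | (IsLine W ∧ p ∈ linePts W) ∧ (X ∩ linePts W).ncard = q + 1}.ncard
        + (q ^ 2 + 1) := by
    have hterm : ∀ W ∈ S.toFinite.toFinset,
        (X ∩ linePts W).ncard
          = (if (X ∩ linePts W).ncard = q + 1 then q else 0) + 1 := by
      intro W hW
      rw [Set.Finite.mem_toFinset] at hW
      rcases hX W hW.1 with h | h <;> split <;> omega
    rw [Finset.sum_congr rfl hterm, Finset.sum_add_distrib, Finset.sum_ite, Finset.sum_const,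
      Finset.sum_const, Finset.sum_const]
    have hScard : S.toFinite.toFinset.card = q ^ 2 + 1 := by
      rw [← Set.ncard_eq_toFinset_card S S.toFinite, hS, lines_through_ncard, hcard]
    have hfcard : (S.toFinite.toFinset.filter
          (fun W => (X ∩ linePts W).ncard = q + 1)).card
        = {W | (IsLine W ∧ p ∈ linePts W) ∧ (X ∩ linePts W).ncard = q + 1}.ncard := by
      rw [Set.ncard_eq_toFinset_card _
        ({W | (IsLine W ∧ p ∈ linePts W) ∧ (X ∩ linePts W).ncard = q + 1}.toFinite)]
      congr 1
      ext W
      simp [Set.Finite.mem_toFinset, hS, and_assoc]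
    rw [hfcard, hScard]
    simp [mul_comm]
  -- point side
  have hpoint : ∑ x ∈ X.toFinite.toFinset, {W | W ∈ S ∧ x ∈ linePts W}.ncard
      = X.ncard + (if p ∈ X then q ^ 2 else 0) := by
    have hterm : ∀ x ∈ X.toFinite.toFinset,
        {W | W ∈ S ∧ x ∈ linePts W}.ncard = (if x = p then q ^ 2 else 0) + 1 := by
      intro x _
      by_cases hxp : x = p
      · subst hxp
        have : {W | W ∈ S ∧ x ∈ linePts W} = S := by
          ext W
          simp only [Set.mem_setOf_eq, hS, and_iff_left_iff_imp]
          exact fun h => h.2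
        rw [this, hS, lines_through_ncard, hcard]
        simp
      · obtain ⟨W₀, hW₀, huniq⟩ := existsUnique_line (Ne.symm hxp)
        have : {W | W ∈ S ∧ x ∈ linePts W} = {W₀} := by
          ext W
          simp only [Set.mem_setOf_eq, hS, Set.mem_singleton_iff]
          constructor
          · rintro ⟨⟨h1, h2⟩, h3⟩
            exact huniq W ⟨h1, h2, h3⟩
          · rintro rfl
            exact ⟨⟨hW₀.1, hW₀.2.1⟩, hW₀.2.2⟩
        rw [this, Set.ncard_singleton]
        simp [hxp]
    rw [Finset.sum_congr rfl hterm, Finset.sum_add_distrib, Finset.sum_const,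
      Finset.sum_ite_eq' (X.toFinite.toFinset) p (fun _ => q ^ 2)]
    simp only [Set.Finite.mem_toFinset, smul_eq_mul, mul_one]
    rw [← Set.ncard_eq_toFinset_card X X.toFinite]
    exact add_comm _ _
  rw [hline, hpoint] at hinc
  exact hinc

open scoped Classical in
lemma count_B_secants_through (q : ℕ) (hq : 2 ≤ q) (hcard : Fintype.card K = q ^ 2)
    (B : Set (PGPoint K)) (hB : IsBaerSubplane q B) (x : PGPoint K) :
    {W | (IsLine W ∧ (B ∩ linePts W).ncard = q + 1) ∧ x ∈ linePts W}.ncard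
      = if x ∈ B then q + 1 else 1 := by
  have h := count_secants_through q hq hcard B hB.2 x
  rw [hB.1] at h
  have hset : {W | (IsLine W ∧ (B ∩ linePts W).ncard = q + 1) ∧ x ∈ linePts W}
      = {W | (IsLine W ∧ x ∈ linePts W) ∧ (B ∩ linePts W).ncard = q + 1} :=
    Set.ext fun W => by simp only [Set.mem_setOf_eq]; tauto
  rw [hset]
  set n := {W | (IsLine W ∧ x ∈ linePts W) ∧ (B ∩ linePts W).ncard = q + 1}.ncard with hn
  by_cases hx : x ∈ B
  · simp only [hx, if_true] at h ⊢
    have h' : q * n + (q ^ 2 + 1) = q * (q + 1) + (q ^ 2 + 1) := by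
      rw [h]; ring
    have := Nat.add_right_cancel h'
    exact Nat.eq_of_mul_eq_mul_left (by omega) this
  · simp only [hx, if_false] at h ⊢
    have h' : q * n + (q ^ 2 + 1) = q * 1 + (q ^ 2 + 1) := by
      rw [h]; ring
    have := Nat.add_right_cancel h'
    exact Nat.eq_of_mul_eq_mul_left (by omega) this

open scoped Classical in
lemma ncard_B_secants (q : ℕ) (hq : 2 ≤ q) (hcard : Fintype.card K = q ^ 2)
    (B : Set (PGPoint K)) (hB : IsBaerSubplane q B) :
    {W : Submodule K (Fin 3 → K) | IsLine W ∧ (B ∩ linePts W).ncard = q + 1}.ncard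
      = q ^ 2 + q + 1 := by
  classical
  set S := {W : Submodule K (Fin 3 → K) | IsLine W ∧ (B ∩ linePts W).ncard = q + 1} with hS
  have hinc := incidence_sum S B
  have hline : ∑ W ∈ S.toFinite.toFinset, (B ∩ linePts W).ncard
      = S.toFinite.toFinset.card * (q + 1) := by
    rw [Finset.sum_congr rfl (fun W hW => ?_), Finset.sum_const, smul_eq_mul]
    rw [Set.Finite.mem_toFinset] at hW
    exact hW.2
  have hpoint : ∑ x ∈ B.toFinite.toFinset, {W | W ∈ S ∧ x ∈ linePts W}.ncard
      = (q ^ 2 + q + 1) * (q + 1) := by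
    have hterm : ∀ x ∈ B.toFinite.toFinset, {W | W ∈ S ∧ x ∈ linePts W}.ncard = q + 1 := by
      intro x hx
      rw [Set.Finite.mem_toFinset] at hx
      have := count_B_secants_through q hq hcard B hB x
      rw [if_pos hx] at this
      exact this
    rw [Finset.sum_congr rfl hterm, Finset.sum_const, smul_eq_mul,
      ← Set.ncard_eq_toFinset_card B B.toFinite, hB.1]
  rw [hline, hpoint] at hinc
  rw [← Set.ncard_eq_toFinset_card S S.toFinite] at hinc
  exact Nat.eq_of_mul_eq_mul_right (by omega) hinc

end Aux

/-- A Baer subplane `B` of `PG(2,q²)` meets a unital `U` in at most `2q+2` points;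
if moreover the tangent line of `U` at some point `P ∈ U ∩ B` meets `B` in `q+1`
points, then `B` meets `U` in at most `2q+1` points. -/
theorem stmt2 {K : Type*} [Field K] [Fintype K] (q : ℕ)
    (hcard : Fintype.card K = q ^ 2)
    (U B : Set (PGPoint K)) (hU : IsUnital q U) (hB : IsBaerSubplane q B) :
    (U ∩ B).ncard ≤ 2 * q + 2 ∧
    (∀ (P : PGPoint K) (W : Submodule K (Fin 3 → K)),
      P ∈ U → P ∈ B → IsLine W → U ∩ linePts W = {P} →
      (B ∩ linePts W).ncard = q + 1 → (U ∩ B).ncard ≤ 2 * q + 1) := by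
  classical
  have hK2 : 1 < Fintype.card K := Fintype.one_lt_card
  have hq : 2 ≤ q := by
    by_contra hlt
    push_neg at hlt
    have h1 : 1 < q ^ 2 := hcard ▸ hK2
    have h2 : q ^ 2 ≤ 1 := by
      calc q ^ 2 ≤ 1 ^ 2 := Nat.pow_le_pow_left (by omega) 2
        _ = 1 := one_pow 2
    omega
  set S := {W : Submodule K (Fin 3 → K) | IsLine W ∧ (B ∩ linePts W).ncard = q + 1} with hS
  have hScard : S.toFinite.toFinset.card = q ^ 2 + q + 1 := by
    rw [← Set.ncard_eq_toFinset_card S S.toFinite]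
    exact ncard_B_secants q hq hcard B hB
  have hinc := incidence_sum S U
  set s := (U ∩ B).ncard with hs
  have hpoint : ∑ x ∈ U.toFinite.toFinset, {W | W ∈ S ∧ x ∈ linePts W}.ncard
      = (q ^ 3 + 1) + q * s := by
    have hterm : ∀ x ∈ U.toFinite.toFinset, {W | W ∈ S ∧ x ∈ linePts W}.ncard
        = (if x ∈ B then q else 0) + 1 := by
      intro x _
      have hcnt := count_B_secants_through q hq hcard B hB x
      rw [show {W | W ∈ S ∧ x ∈ linePts W}
          = {W | (IsLine W ∧ (B ∩ linePts W).ncard = q + 1) ∧ x ∈ linePts W} from rfl, hcnt]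
      split <;> simp
    rw [Finset.sum_congr rfl hterm, Finset.sum_add_distrib, Finset.sum_const, smul_eq_mul,
      mul_one]
    have h1 : ∑ x ∈ U.toFinite.toFinset, (if x ∈ B then q else 0) = q * s := by
      rw [← Finset.sum_filter, Finset.sum_const, smul_eq_mul]
      have : (U.toFinite.toFinset.filter (fun x => x ∈ B)) = (U ∩ B).toFinite.toFinset := by
        ext x
        simp [Set.Finite.mem_toFinset]
      rw [this, ← Set.ncard_eq_toFinset_card (U ∩ B) ((U ∩ B).toFinite), ← hs, mul_comm]
    have h2 : U.toFinite.toFinset.card = q ^ 3 + 1 := by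
      rw [← Set.ncard_eq_toFinset_card U U.toFinite, hU.1]
    rw [h1, h2]
    ring
  rw [hpoint] at hinc
  -- hinc : line sum = (q^3+1) + q*s
  have hbound1 : ∑ W ∈ S.toFinite.toFinset, (U ∩ linePts W).ncard
      ≤ (q ^ 2 + q + 1) * (q + 1) := by
    have := Finset.sum_le_card_nsmul (S.toFinite.toFinset)
      (fun W => (U ∩ linePts W).ncard) (q + 1) (fun W hW => by
        show (U ∩ linePts W).ncard ≤ q + 1
        rw [Set.Finite.mem_toFinset] at hW
        rcases hU.2 W hW.1 with h | h <;> omega)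
    rwa [hScard, smul_eq_mul] at this
  constructor
  · rw [hinc] at hbound1
    have hmul : q * s ≤ q * (2 * q + 2) := by nlinarith
    exact Nat.le_of_mul_le_mul_left hmul (by omega)
  · intro P W₀ hPU hPB hlW₀ htan hsec
    have hW₀S : W₀ ∈ S.toFinite.toFinset := by
      rw [Set.Finite.mem_toFinset]
      exact ⟨hlW₀, hsec⟩
    have hsum2 : ∑ W ∈ S.toFinite.toFinset, (U ∩ linePts W).ncard
        = 1 + ∑ W ∈ S.toFinite.toFinset.erase W₀, (U ∩ linePts W).ncard := by
      rw [← Finset.add_sum_erase _ _ hW₀S, htan, Set.ncard_singleton]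
    have herase : ∑ W ∈ S.toFinite.toFinset.erase W₀, (U ∩ linePts W).ncard
        ≤ (q ^ 2 + q) * (q + 1) := by
      have := Finset.sum_le_card_nsmul (S.toFinite.toFinset.erase W₀)
        (fun W => (U ∩ linePts W).ncard) (q + 1) (fun W hW => by
          show (U ∩ linePts W).ncard ≤ q + 1
          have hW' := Finset.mem_of_mem_erase hW
          rw [Set.Finite.mem_toFinset] at hW'
          rcases hU.2 W hW'.1 with h | h <;> omega)
      rwa [Finset.card_erase_of_mem hW₀S, hScard, smul_eq_mul,
        show q ^ 2 + q + 1 - 1 = q ^ 2 + q by omega] at this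
    have hcomb : (q ^ 3 + 1) + q * s ≤ 1 + (q ^ 2 + q) * (q + 1) := by
      rw [← hinc, hsum2]
      omega
    have hmul : q * s ≤ q * (2 * q + 1) := by nlinarith
    exact Nat.le_of_mul_le_mul_left hmul (by omega)
end

section
/- Let q > 2 and let k be a natural number with k < √q − 1. Let S be a set of q² − ε points of the affine plane AG(2,q) with ε ≤ kq, equipped with a labeling function assigning to each point one of q+1 labels. Suppose that whenever a point Q of S lies on an affine line containing two points of S with a common label v, then Q also has label v. If some label occurs at least q+2 times among points of S, then all points of S have that label. -/
/-- The closure condition: if a point `Q` of `S` lies on an affine line containing two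
distinct points of `S` with the same label, then `Q` also has that label. -/
def ClosureCond {F : Type*} [Field F] {Λ : Type*}
    (S : Set (Fin 2 → F)) (label : (Fin 2 → F) → Λ) : Prop :=
  ∀ P Q R : Fin 2 → F, P ∈ S → Q ∈ S → R ∈ S → P ≠ Q → label P = label Q →
    Collinear F ({P, Q, R} : Set (Fin 2 → F)) → label R = label P

/-- Let `q > 2`, `k < √q − 1`, and let `S` be a set of `q² − ε` points of `AG(2,q)`,
`ε ≤ kq`, labeled with `q+1` labels satisfying the closure condition. If some label
occurs at least `q+2` times among points of `S`, then all points of `S` have that label. -/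
theorem stmt3 {F : Type*} [Field F] [Fintype F] (q k ε : ℕ)
    (hcard : Fintype.card F = q) (hq : 2 < q)
    (hk : (k : ℝ) < Real.sqrt q - 1)
    (S : Set (Fin 2 → F)) (label : (Fin 2 → F) → Fin (q + 1))
    (hε : ε ≤ k * q) (hS : S.ncard = q ^ 2 - ε)
    (hclosure : ClosureCond S label)
    (v : Fin (q + 1)) (hv : q + 2 ≤ {x ∈ S | label x = v}.ncard) :
    ∀ x ∈ S, label x = v := by
  classical
  intro x hxS
  by_contra hxv
  set T := {p ∈ S | label p = v} with hT
  set f : (Fin 2 → F) → Option F :=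
    fun P => if P 0 = x 0 then none else some ((P 1 - x 1) / (P 0 - x 0)) with hf
  have hinj : Set.InjOn f T := by
    intro P hP Q hQ hfPQ
    by_contra hPQ
    have hPx : P ≠ x := fun h => hxv (h ▸ hP.2)
    have hQx : Q ≠ x := fun h => hxv (h ▸ hQ.2)
    have hcol : Collinear F ({P, Q, x} : Set (Fin 2 → F)) := by
      rw [collinear_iff_of_mem (show x ∈ ({P, Q, x} : Set (Fin 2 → F)) by simp)]
      refine ⟨P - x, fun p hp => ?_⟩
      simp only [Set.mem_insert_iff, Set.mem_singleton_iff] at hp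
      rcases hp with rfl | rfl | rfl
      · exact ⟨1, by funext i; simp⟩
      · simp only [hf] at hfPQ
        split_ifs at hfPQ with h1 h2 h2
        all_goals try simp at hfPQ
        · -- both vertical
          have hP1 : P 1 ≠ x 1 := by
            intro h; apply hPx; funext i; fin_cases i <;> assumption
          refine ⟨(p 1 - x 1) / (P 1 - x 1), ?_⟩
          rw [funext_iff, Fin.forall_fin_two]
          constructor <;>
            simp only [vadd_eq_add, Pi.add_apply, Pi.smul_apply,
              Pi.sub_apply, smul_eq_mul]
          · rw [h1, h2]; ring
          · rw [div_mul_cancel₀ _ (sub_ne_zero.mpr hP1)]; ring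
        · -- both non-vertical, same slope
          rw [div_eq_div_iff (sub_ne_zero.mpr h1) (sub_ne_zero.mpr h2)] at hfPQ
          refine ⟨(p 0 - x 0) / (P 0 - x 0), ?_⟩
          rw [funext_iff, Fin.forall_fin_two]
          constructor <;>
            simp only [vadd_eq_add, Pi.add_apply, Pi.smul_apply,
              Pi.sub_apply, smul_eq_mul]
          · rw [div_mul_cancel₀ _ (sub_ne_zero.mpr h1)]; ring
          · field_simp [sub_ne_zero.mpr h1]
            linear_combination -hfPQ
      · exact ⟨0, by funext i; simp⟩
    have := hclosure P Q x hP.1 hQ.1 hxS hPQ (hP.2.trans hQ.2.symm) hcol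
    exact hxv (this.trans hP.2)
  have hle : T.ncard ≤ (Set.univ : Set (Option F)).ncard :=
    Set.ncard_le_ncard_of_injOn f (fun _ _ => Set.mem_univ _) hinj Set.finite_univ
  rw [Set.ncard_univ, Nat.card_eq_fintype_card, Fintype.card_option, hcard] at hle
  omega
end

section
/- Let q > 2 and k ∈ ℕ with k < √q − 1. Let S be a set of at least q² − kq points of AG(2,q) labeled with q+1 labels satisfying the closure condition. If not all points of S share a single label, then there exist at least two distinct labels each occurring at least q − k times among the points of S. -/
/-!
Suppose not. Counting gives a label class `C` with at least `q - k` points while all other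
classes have at most `q - k - 1`; this forces `|C| ≥ q`. A point outside `C` sees the points of
`C` in pairwise distinct directions, so `|C| ≤ q + 1`. If `|C| = q + 1`, every line through a
point outside `C` meets `C`, so the other classes are singletons and `S` is too small.
If `|C| = q`, every other class has at least two points. When `C` is a line, each other class
lies on a line parallel to it, a different one for each label, but only `q - 1` parallels are
left for `q` labels. Otherwise, a line through two points of `C` meets `S` only in `C`, and at
most `kq` points are missing from `S`; hence every point of `C` sees the rest of `C` in at most
`k + 1` directions, and a non-collinear set with this property has at most `k(k + 1) + 1 < q`
points.
-/

open Finset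

section Intercept

variable {F : Type*} [Field F]

def slopeDir : Option F → Fin 2 → F
  | none => ![0, 1]
  | some c => ![1, c]

/-- The lines of slope `m` are the fibres of `intercept m`: the `y`-intercept, or the
`x`-coordinate for vertical lines (`m = none`). -/
def intercept : Option F → (Fin 2 → F) →ₗ[F] F
  | none => LinearMap.proj 0
  | some c => LinearMap.proj 1 - c • LinearMap.proj 0

lemma slopeDir_smul_injective (m : Option F) : Function.Injective fun t : F => t • slopeDir m := by
  intro s t h
  cases m with
  | none => simpa [slopeDir] using congrFun h 1
  | some c => simpa [slopeDir] using congrFun h 0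

lemma intercept_slopeDir (m : Option F) : intercept m (slopeDir m) = 0 := by
  cases m <;> simp [intercept, slopeDir]

lemma intercept_eq_iff {m : Option F} {z z' : Fin 2 → F} :
    intercept m z' = intercept m z ↔ ∃ t : F, z' = z + t • slopeDir m := by
  refine ⟨fun h => ?_, ?_⟩
  · cases m with
    | none =>
      refine ⟨z' 1 - z 1, funext fun i => ?_⟩
      fin_cases i <;> simp_all [intercept, slopeDir]
    | some c =>
      refine ⟨z' 0 - z 0, funext fun i => ?_⟩
      fin_cases i
      · simp [slopeDir]
      · simp only [intercept, LinearMap.sub_apply, LinearMap.coe_proj, Function.eval,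
          LinearMap.smul_apply, smul_eq_mul] at h
        simp only [Fin.mk_one, slopeDir, Matrix.smul_cons, smul_eq_mul, mul_one, Matrix.smul_empty,
          Pi.add_apply, Matrix.cons_val_one, Matrix.cons_val_fin_one]
        linear_combination h
  · rintro ⟨t, rfl⟩
    simp [intercept_slopeDir]

lemma exists_intercept_eq (m : Option F) (c : F) : ∃ z, intercept m z = c := by
  cases m with
  | none => exact ⟨![c, 0], by simp [intercept]⟩
  | some _ => exact ⟨![0, c], by simp [intercept]⟩

lemma collinear_setOf_intercept_eq (m : Option F) (c : F) :
    Collinear F {z : Fin 2 → F | intercept m z = c} := by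
  obtain ⟨z₀, hz₀⟩ := exists_intercept_eq m c
  refine collinear_iff_exists_forall_eq_smul_vadd _ |>.mpr ⟨z₀, slopeDir m, fun z hz => ?_⟩
  obtain ⟨t, rfl⟩ := intercept_eq_iff.mp (hz.trans hz₀.symm)
  exact ⟨t, add_comm _ _⟩

lemma collinear_of_intercept_eq {m : Option F} {P Q R : Fin 2 → F}
    (hQ : intercept m Q = intercept m P) (hR : intercept m R = intercept m P) :
    Collinear F ({P, Q, R} : Set (Fin 2 → F)) := by
  refine (collinear_setOf_intercept_eq m (intercept m P)).subset ?_
  simp [Set.insert_subset_iff, hQ, hR]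

lemma exists_collinear_intercept_eq {m : Option F} {P Q : Fin 2 → F}
    (hPQ : intercept m P ≠ intercept m Q) (c : F) :
    ∃ x, intercept m x = c ∧ Collinear F ({P, Q, x} : Set (Fin 2 → F)) := by
  have hden : intercept m Q - intercept m P ≠ 0 := sub_ne_zero.mpr hPQ.symm
  set τ := (c - intercept m P) / (intercept m Q - intercept m P)
  refine ⟨P + τ • (Q - P), ?_, ?_⟩
  · simp only [map_add, map_smul, map_sub, smul_eq_mul, τ, div_mul_cancel₀ _ hden]
    ring
  · rw [collinear_iff_of_mem (Set.mem_insert P _)]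
    refine ⟨Q - P, ?_⟩
    simp only [Set.mem_insert_iff, Set.mem_singleton_iff, forall_eq_or_imp, forall_eq]
    exact ⟨⟨0, by simp⟩, ⟨1, by simp⟩, ⟨τ, by rw [vadd_eq_add, add_comm]⟩⟩

lemma card_filter_intercept_eq [Fintype F] [DecidableEq F] (m : Option F) (c : F) :
    #{z | intercept m z = c} = Fintype.card F := by
  obtain ⟨z₀, hz₀⟩ := exists_intercept_eq m c
  have : ({z | intercept m z = c} : Finset (Fin 2 → F))
      = univ.image fun t : F => z₀ + t • slopeDir m := by
    ext z
    simp only [mem_filter, mem_univ, true_and, mem_image, ← hz₀, intercept_eq_iff]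
    exact exists_congr fun t => eq_comm
  rw [this, card_image_of_injective _ fun s t h => slopeDir_smul_injective m (add_left_cancel h),
    card_univ]

end Intercept

section Slope

variable {F : Type*} [Field F] [DecidableEq F]

/-- The slope of the line through `y` and `z`, `none` if it is vertical (and, as a junk value,
if `z = y`). -/
def lineSlope (y z : Fin 2 → F) : Option F :=
  if z 0 = y 0 then none else some ((z 1 - y 1) / (z 0 - y 0))

lemma lineSlope_add_smul (y v : Fin 2 → F) {t : F} (ht : t ≠ 0) :
    lineSlope y (y + t • v) = lineSlope y (y + v) := by
  simp [lineSlope, ht, mul_div_mul_left]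

lemma lineSlope_add_slopeDir (y : Fin 2 → F) (m : Option F) :
    lineSlope y (y + slopeDir m) = m := by
  cases m <;> simp [lineSlope, slopeDir]

lemma ne_and_lineSlope_eq_iff {y z : Fin 2 → F} {m : Option F} :
    (z ≠ y ∧ lineSlope y z = m) ↔ ∃ t : F, t ≠ 0 ∧ z = y + t • slopeDir m := by
  constructor
  · rintro ⟨hzy, rfl⟩
    by_cases h0 : z 0 = y 0
    · have h1 : z 1 - y 1 ≠ 0 := fun h1 => hzy <| funext fun i => by
        fin_cases i
        · exact h0
        · exact sub_eq_zero.mp h1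
      refine ⟨z 1 - y 1, h1, funext fun i => ?_⟩
      fin_cases i <;> simp [lineSlope, slopeDir, h0]
    · have h0' : z 0 - y 0 ≠ 0 := sub_ne_zero.mpr h0
      refine ⟨z 0 - y 0, h0', funext fun i => ?_⟩
      fin_cases i
      · simp [lineSlope, slopeDir, h0]
      · simp only [Fin.mk_one, slopeDir, lineSlope, h0, ↓reduceIte, Matrix.smul_cons,
          smul_eq_mul, mul_one, Matrix.smul_empty, Pi.add_apply, Matrix.cons_val_one, Matrix.cons_val_fin_one]
        field_simp
        ring
  · rintro ⟨t, ht, rfl⟩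
    refine ⟨fun h => ht (slopeDir_smul_injective m ?_), ?_⟩
    · simpa using show y + t • slopeDir m = y + 0 from h.trans (add_zero y).symm
    · rw [lineSlope_add_smul y _ ht, lineSlope_add_slopeDir]

lemma lineSlope_eq_iff_intercept_eq {y z : Fin 2 → F} (hz : z ≠ y) {m : Option F} :
    lineSlope y z = m ↔ intercept m z = intercept m y := by
  rw [intercept_eq_iff]
  constructor
  · intro h
    obtain ⟨t, -, ht⟩ := ne_and_lineSlope_eq_iff.mp ⟨hz, h⟩
    exact ⟨t, ht⟩
  · rintro ⟨t, rfl⟩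
    have ht : t ≠ 0 := by rintro rfl; simp at hz
    exact (ne_and_lineSlope_eq_iff.mpr ⟨t, ht, rfl⟩).2

lemma lineSlope_eq_lineSlope_iff_collinear {y z z' : Fin 2 → F} (hz : z ≠ y) (hz' : z' ≠ y) :
    lineSlope y z = lineSlope y z' ↔ Collinear F ({y, z, z'} : Set (Fin 2 → F)) := by
  constructor
  · intro h
    exact collinear_of_intercept_eq ((lineSlope_eq_iff_intercept_eq hz).mp rfl)
      ((lineSlope_eq_iff_intercept_eq hz').mp h.symm)
  · intro h
    obtain ⟨v, hv⟩ := (collinear_iff_of_mem (Set.mem_insert y _)).mp h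
    obtain ⟨r, rfl⟩ := hv z (by simp)
    obtain ⟨r', rfl⟩ := hv z' (by simp)
    have hr : r ≠ 0 := by rintro rfl; simp at hz
    have hr' : r' ≠ 0 := by rintro rfl; simp at hz'
    rw [vadd_eq_add, vadd_eq_add, add_comm, add_comm _ y, lineSlope_add_smul y v hr,
      lineSlope_add_smul y v hr']

lemma card_filter_ne_lineSlope_eq [Fintype F] (y : Fin 2 → F) (m : Option F) :
    #{z | z ≠ y ∧ lineSlope y z = m} = Fintype.card F - 1 := by
  have : ({z | z ≠ y ∧ lineSlope y z = m} : Finset (Fin 2 → F))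
      = (univ.erase 0).image fun t : F => y + t • slopeDir m := by
    ext z
    simp only [mem_filter, mem_univ, true_and, ne_and_lineSlope_eq_iff, mem_image, mem_erase]
    exact exists_congr fun t => by rw [and_true, eq_comm (a := z)]
  rw [this, card_image_of_injective _ fun s t h => slopeDir_smul_injective m (add_left_cancel h),
    card_erase_of_mem (mem_univ _), card_univ]

lemma injOn_lineSlope_of_intercept_ne {m : Option F} {c : F} {y : Fin 2 → F}
    (hy : intercept m y ≠ c) : Set.InjOn (lineSlope y) {z | intercept m z = c} := by
  intro a ha b hb hab
  by_contra hne
  have hay : a ≠ y := by rintro rfl; exact hy ha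
  have hby : b ≠ y := by rintro rfl; exact hy hb
  have hcol : Collinear F ({a, y, b} : Set (Fin 2 → F)) := by
    rw [Set.insert_comm]
    exact (lineSlope_eq_lineSlope_iff_collinear hay hby).mp hab
  have hslope : lineSlope a y = m := by
    rw [(lineSlope_eq_lineSlope_iff_collinear hay.symm (Ne.symm hne)).mpr hcol,
      lineSlope_eq_iff_intercept_eq (Ne.symm hne)]
    exact hb.trans ha.symm
  exact hy (((lineSlope_eq_iff_intercept_eq hay.symm).mp hslope).trans ha)

lemma exists_eq_filter_intercept_eq_of_collinear [Fintype F] {C : Finset (Fin 2 → F)}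
    (hC : Collinear F (C : Set (Fin 2 → F))) (hcard : #C = Fintype.card F) :
    ∃ m c, C = ({z | intercept m z = c} : Finset (Fin 2 → F)) := by
  obtain ⟨a, ha, b, hb, hab⟩ := one_lt_card.mp (hcard ▸ Fintype.one_lt_card)
  refine ⟨lineSlope a b, intercept (lineSlope a b) a,
    eq_of_subset_of_card_le (fun z hz => ?_) (by rw [card_filter_intercept_eq, hcard])⟩
  refine mem_filter.mpr ⟨mem_univ z, ?_⟩
  rcases eq_or_ne z a with rfl | hza
  · rfl
  rw [← lineSlope_eq_iff_intercept_eq hza, lineSlope_eq_lineSlope_iff_collinear hza (Ne.symm hab)]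
  exact hC.subset (by simp [Set.insert_subset_iff, ha, hb, hz])

lemma card_le_of_not_collinear {C : Finset (Fin 2 → F)} (hC : ¬ Collinear F (C : Set (Fin 2 → F)))
    {r : ℕ} (hr : ∀ y ∈ C, #((C.erase y).image (lineSlope y)) ≤ r) : #C ≤ (r - 1) * r + 1 := by
  obtain ⟨y, hy⟩ : C.Nonempty := by
    rw [nonempty_iff_ne_empty]; rintro rfl; simp [collinear_empty] at hC
  -- Some line through `y` carries `r + 1` points of `C`; a point of `C` off that line sees them
  -- in `r + 1` distinct directions.
  by_contra! hlarge
  have hfibres : #((C.erase y).image (lineSlope y)) * (r - 1) < #(C.erase y) := by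
    rw [card_erase_of_mem hy]
    have := Nat.mul_le_mul_right (r - 1) (hr y hy)
    rw [mul_comm r] at this
    omega
  obtain ⟨m, -, hm⟩ :=
    exists_lt_card_fiber_of_mul_lt_card_of_maps_to (fun z hz => mem_image_of_mem _ hz) hfibres
  set c := intercept m y
  obtain ⟨y', hy'C, hy'⟩ : ∃ y' ∈ C, intercept m y' ≠ c := by
    by_contra! h
    exact hC ((collinear_setOf_intercept_eq m c).subset h)
  have hline : r + 1 ≤ #{z ∈ C | intercept m z = c} := by
    have hsub : insert y {z ∈ C.erase y | lineSlope y z = m} ⊆ {z ∈ C | intercept m z = c} := by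
      intro z hz
      rcases mem_insert.mp hz with rfl | hz
      · exact mem_filter.mpr ⟨hy, rfl⟩
      · obtain ⟨hz, hzm⟩ := mem_filter.mp hz
        exact mem_filter.mpr ⟨mem_of_mem_erase hz,
          (lineSlope_eq_iff_intercept_eq (ne_of_mem_erase hz)).mp hzm⟩
    have := card_le_card hsub
    rw [card_insert_of_notMem (fun h => ne_of_mem_erase (mem_filter.mp h).1 rfl)] at this
    omega
  have hdirs : #{z ∈ C | intercept m z = c} ≤ #((C.erase y').image (lineSlope y')) := by
    refine card_le_card_of_injOn _ (fun z hz => ?_) fun a ha b hb =>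
      injOn_lineSlope_of_intercept_ne hy' (mem_filter.mp ha).2 (mem_filter.mp hb).2
    obtain ⟨hzC, hzc⟩ := mem_filter.mp hz
    exact mem_image_of_mem _ (mem_erase.mpr ⟨by rintro rfl; exact hy' hzc, hzC⟩)
  have := hr y' hy'C
  omega

end Slope

lemma sum_le_sum_add_card_compl_mul {ι : Type*} [Fintype ι] [DecidableEq ι] (f : ι → ℕ)
    (s : Finset ι) {B : ℕ} (h : ∀ i ∉ s, f i ≤ B) :
    ∑ i, f i ≤ ∑ i ∈ s, f i + (Fintype.card ι - #s) * B := by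
  rw [← sum_add_sum_compl s f, ← card_compl, ← smul_eq_mul]
  gcongr
  exact sum_le_card_nsmul _ _ _ fun i hi => h i (mem_compl.mp hi)

namespace ClosureCond

variable {F : Type*} [Field F] [DecidableEq F] {Λ : Type*} [DecidableEq Λ]
  {S : Finset (Fin 2 → F)} {label : (Fin 2 → F) → Λ}

lemma injOn_lineSlope (hS : ClosureCond (S : Set (Fin 2 → F)) label) {P : Fin 2 → F} {v : Λ}
    (hP : P ∈ S) (hPv : label P ≠ v) :
    Set.InjOn (lineSlope P) ↑({x ∈ S | label x = v} : Finset (Fin 2 → F)) := by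
  intro x hx z hz hxz
  by_contra hne
  obtain ⟨hxS, rfl⟩ := mem_filter.mp hx
  obtain ⟨hzS, hzx⟩ := mem_filter.mp hz
  have hxP : x ≠ P := by rintro rfl; exact hPv rfl
  have hzP : z ≠ P := by rintro rfl; exact hPv hzx
  have hcol := (lineSlope_eq_lineSlope_iff_collinear hxP hzP).mp hxz
  rw [Set.insert_comm, Set.pair_comm] at hcol
  exact hPv (hS x z P hxS hzS hP hne hzx.symm hcol)

variable [Fintype F]

lemma card_filter_label_eq_le (hS : ClosureCond (S : Set (Fin 2 → F)) label) {P : Fin 2 → F}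
    {v : Λ} (hP : P ∈ S) (hPv : label P ≠ v) :
    #{x ∈ S | label x = v} ≤ Fintype.card F + 1 := by
  simpa using
    card_le_card_of_injOn (t := univ) _ (fun _ _ => mem_univ _) (hS.injOn_lineSlope hP hPv)

/-- If a class has `q + 1` points, every line through a point outside it meets it. -/
lemma card_filter_label_eq_le_one (hS : ClosureCond (S : Set (Fin 2 → F)) label) {v w : Λ}
    (hv : #{x ∈ S | label x = v} = Fintype.card F + 1) (hwv : w ≠ v) :
    #{x ∈ S | label x = w} ≤ 1 := by
  refine card_le_one.mpr fun a ha b hb => by_contra fun hab => ?_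
  obtain ⟨haS, rfl⟩ := mem_filter.mp ha
  obtain ⟨hbS, hba⟩ := mem_filter.mp hb
  have himage : ({x ∈ S | label x = v} : Finset _).image (lineSlope a) = univ := by
    refine eq_univ_of_card _ ?_
    rw [card_image_of_injOn (hS.injOn_lineSlope haS hwv), hv, Fintype.card_option]
  obtain ⟨x, hx, hxb⟩ := mem_image.mp (himage ▸ mem_univ (lineSlope a b))
  obtain ⟨hxS, hxv⟩ := mem_filter.mp hx
  have hxa : x ≠ a := by rintro rfl; exact hwv hxv
  have hcol := (lineSlope_eq_lineSlope_iff_collinear (Ne.symm hab) hxa).mp hxb.symm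
  exact hwv ((hS a b x haS hbS hxS hab hba.symm hcol).symm.trans hxv)

lemma card_image_lineSlope_mul_le (hS : ClosureCond (S : Set (Fin 2 → F)) label) {v : Λ}
    {y : Fin 2 → F} (hy : y ∈ ({x ∈ S | label x = v} : Finset _)) :
    #((({x ∈ S | label x = v} : Finset _).erase y).image (lineSlope y)) * (Fintype.card F - 1)
      ≤ #Sᶜ + #(({x ∈ S | label x = v} : Finset _).erase y) := by
  set C : Finset (Fin 2 → F) := {x ∈ S | label x = v}
  set D := (C.erase y).image (lineSlope y)
  set ray : Option F → Finset (Fin 2 → F) := fun m => {z | z ≠ y ∧ lineSlope y z = m}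
  have hdisj : (D : Set (Option F)).PairwiseDisjoint ray := fun m _ m' _ hmm' =>
    disjoint_left.mpr fun z hz hz' =>
      hmm' ((mem_filter.mp hz).2.2.symm.trans (mem_filter.mp hz').2.2)
  -- a line through `y` and another point of `C` meets `S` only in `C`
  have hsub : D.biUnion ray ⊆ Sᶜ ∪ C.erase y := by
    intro z hz
    obtain ⟨m, hm, hzm⟩ := mem_biUnion.mp hz
    obtain ⟨z₀, hz₀, rfl⟩ := mem_image.mp hm
    obtain ⟨hzy, hzm⟩ := (mem_filter.mp hzm).2
    obtain ⟨hz₀y, hz₀C⟩ := mem_erase.mp hz₀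
    obtain ⟨hyS, hyv⟩ := mem_filter.mp hy
    obtain ⟨hz₀S, hz₀v⟩ := mem_filter.mp hz₀C
    by_cases hzS : z ∈ S
    · have hcol := (lineSlope_eq_lineSlope_iff_collinear hz₀y hzy).mp hzm.symm
      have hzv := hS y z₀ z hyS hz₀S hzS (Ne.symm hz₀y) (hyv.trans hz₀v.symm) hcol
      exact mem_union_right _ (mem_erase.mpr ⟨hzy, mem_filter.mpr ⟨hzS, hzv.trans hyv⟩⟩)
    · exact mem_union_left _ (mem_compl.mpr hzS)
  calc #D * (Fintype.card F - 1) = #(D.biUnion ray) := by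
        rw [card_biUnion hdisj, sum_const_nat fun m _ => card_filter_ne_lineSlope_eq y m]
    _ ≤ #(Sᶜ ∪ C.erase y) := card_le_card hsub
    _ ≤ #Sᶜ + #(C.erase y) := card_union_le _ _

lemma intercept_eq_of_label_eq (hS : ClosureCond (S : Set (Fin 2 → F)) label) {v : Λ}
    {m : Option F} {c : F}
    (hline : ({x ∈ S | label x = v} : Finset _) = ({z | intercept m z = c} : Finset _))
    {P Q : Fin 2 → F} (hP : P ∈ S) (hQ : Q ∈ S) (hPQ : label P = label Q) (hPv : label P ≠ v) :
    intercept m P = intercept m Q := by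
  by_contra hne
  obtain ⟨x, hx, hcol⟩ := exists_collinear_intercept_eq hne c
  have hxv : x ∈ ({x ∈ S | label x = v} : Finset _) := hline ▸ mem_filter.mpr ⟨mem_univ x, hx⟩
  obtain ⟨hxS, hxv⟩ := mem_filter.mp hxv
  exact hPv ((hS P Q x hP hQ hxS (by rintro rfl; exact hne rfl) hPQ hcol).symm.trans hxv)

/-- If one class is a whole line, each other class lies on a parallel line of its own; there are
only `q - 1` such lines for the `q` other labels. -/
lemma exists_card_filter_label_eq_lt_two [Fintype Λ]
    (hS : ClosureCond (S : Set (Fin 2 → F)) label) (hΛ : Fintype.card Λ = Fintype.card F + 1)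
    {v : Λ} {m : Option F} {c : F}
    (hline : ({x ∈ S | label x = v} : Finset _) = ({z | intercept m z = c} : Finset _)) :
    ∃ w ≠ v, #{x ∈ S | label x = w} < 2 := by
  by_contra! htwo
  have hnonempty : ∀ w ≠ v, ∃ x ∈ S, label x = w := fun w hw => by
    obtain ⟨x, hx⟩ : ({x ∈ S | label x = w} : Finset _).Nonempty :=
      card_pos.mp (by have := htwo w hw; omega)
    exact ⟨x, mem_filter.mp hx⟩
  choose! p hpS hpl using hnonempty
  have hmaps : Set.MapsTo (fun w => intercept m (p w)) ↑(univ.erase v) ↑(univ.erase c) := by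
    intro w hw
    have hwv := ne_of_mem_erase hw
    refine mem_erase.mpr ⟨fun hc => hwv ?_, mem_univ _⟩
    have hpv : p w ∈ ({x ∈ S | label x = v} : Finset _) := hline ▸ mem_filter.mpr ⟨mem_univ _, hc⟩
    exact (hpl w hwv).symm.trans (mem_filter.mp hpv).2
  have hlt : #(univ.erase c) < #(univ.erase v) := by
    simp only [card_erase_of_mem (mem_univ _), card_univ, hΛ]
    have := Fintype.card_pos (α := F)
    omega
  obtain ⟨a, ha, b, hb, hab, hpab⟩ := exists_ne_map_eq_of_card_lt_of_maps_to hlt hmaps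
  have hav := ne_of_mem_erase ha
  have hbv := ne_of_mem_erase hb
  obtain ⟨Q, hQ, Q', hQ', hQQ'⟩ := one_lt_card.mp (htwo b hbv)
  obtain ⟨hQS, hQb⟩ := mem_filter.mp hQ
  obtain ⟨hQ'S, hQ'b⟩ := mem_filter.mp hQ'
  have hpb : ∀ {x}, x ∈ S → label x = b → intercept m x = intercept m (p a) := fun hx hxb =>
    (hS.intercept_eq_of_label_eq hline hx (hpS b hbv) (hxb.trans (hpl b hbv).symm)
      (hxb ▸ hbv)).trans hpab.symm
  have hcol := collinear_of_intercept_eq ((hpb hQ'S hQ'b).trans (hpb hQS hQb).symm)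
    (hpb hQS hQb).symm
  have := hS Q Q' (p a) hQS hQ'S (hpS a hav) hQQ' (hQb.trans hQ'b.symm) hcol
  exact hab ((hpl a hav).symm.trans (this.trans hQb))

lemma exists_card_filter_label_eq_lt_two_of_card_eq [Fintype Λ]
    (hS : ClosureCond (S : Set (Fin 2 → F)) label) (hΛ : Fintype.card Λ = Fintype.card F + 1)
    {k : ℕ} (hk : (k + 1) ^ 2 < Fintype.card F) (hmiss : #Sᶜ ≤ k * Fintype.card F) {v : Λ}
    (hv : #{x ∈ S | label x = v} = Fintype.card F) :
    ∃ w ≠ v, #{x ∈ S | label x = w} < 2 := by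
  by_cases hcol : Collinear F ((({x ∈ S | label x = v} : Finset _)) : Set (Fin 2 → F))
  · obtain ⟨m, c, hline⟩ := exists_eq_filter_intercept_eq_of_collinear hcol hv
    exact hS.exists_card_filter_label_eq_lt_two hΛ hline
  · exfalso
    obtain ⟨p, hp⟩ : ∃ p, Fintype.card F = p + 1 :=
      ⟨_, (Nat.succ_pred_eq_of_pos Fintype.card_pos).symm⟩
    have hdirs : ∀ y ∈ ({x ∈ S | label x = v} : Finset _),
        #((({x ∈ S | label x = v} : Finset _).erase y).image (lineSlope y)) ≤ k + 1 := by
      intro y hy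
      have := hS.card_image_lineSlope_mul_le hy
      rw [card_erase_of_mem hy, hv, hp, Nat.add_sub_cancel] at this
      rw [hp] at hmiss hk
      nlinarith
    have := card_le_of_not_collinear hcol hdirs
    rw [hv, Nat.add_sub_cancel] at this
    nlinarith

end ClosureCond

theorem ClosureCond.exists_two_large_classes {F : Type*} [Field F] [Fintype F] [DecidableEq F]
    {Λ : Type*} [Fintype Λ] [DecidableEq Λ] {S : Finset (Fin 2 → F)} {label : (Fin 2 → F) → Λ}
    (hS : ClosureCond (S : Set (Fin 2 → F)) label) (hΛ : Fintype.card Λ = Fintype.card F + 1)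
    {k : ℕ} (hq : 2 < Fintype.card F) (hk : (k + 1) ^ 2 < Fintype.card F)
    (hcard : Fintype.card F ^ 2 ≤ #S + k * Fintype.card F) (hnot : ∀ v, ∃ x ∈ S, label x ≠ v) :
    ∃ v₁ v₂, v₁ ≠ v₂ ∧ Fintype.card F - k ≤ #{x ∈ S | label x = v₁} ∧
      Fintype.card F - k ≤ #{x ∈ S | label x = v₂} := by
  have hmiss : #Sᶜ ≤ k * Fintype.card F := by
    rw [card_compl, Fintype.card_fun, Fintype.card_fin]
    omega
  obtain ⟨B, hB⟩ : ∃ B, Fintype.card F = B + k + 1 :=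
    ⟨Fintype.card F - k - 1, by have := Nat.le_self_pow two_ne_zero (k + 1); omega⟩
  have hlt_two := fun v => hS.exists_card_filter_label_eq_lt_two_of_card_eq hΛ hk hmiss (v := v)
  rw [hB] at hΛ hq hk hcard hmiss hlt_two
  have hB2 : 2 ≤ B := by
    rcases k with _ | k
    · omega
    · nlinarith
  have hsum : ∑ v, #{x ∈ S | label x = v} = #S :=
    (card_eq_sum_card_fiberwise fun x _ => mem_univ (label x)).symm
  by_contra! hsmall
  obtain ⟨v, -, hv⟩ : ∃ v ∈ univ, B < #{x ∈ S | label x = v} := by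
    refine exists_lt_of_sum_lt ?_
    rw [hsum, sum_const, card_univ, hΛ, smul_eq_mul]
    nlinarith
  have hother : ∀ w ≠ v, #{x ∈ S | label x = w} ≤ B := fun w hw => by
    have := hsmall v w hw.symm (by omega)
    omega
  have hvq : B + k + 1 ≤ #{x ∈ S | label x = v} := by
    have := sum_le_sum_add_card_compl_mul _ {v} (by simpa using hother)
    rw [sum_singleton, card_singleton, hΛ, hsum, add_tsub_cancel_right] at this
    nlinarith
  obtain ⟨P, hPS, hPv⟩ := hnot v
  rcases (hS.card_filter_label_eq_le hPS hPv).eq_or_lt with hfull | hv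
  · have := sum_le_sum_add_card_compl_mul _ {v}
      fun w hw => hS.card_filter_label_eq_le_one hfull (by simpa using hw)
    rw [sum_singleton, card_singleton, hΛ, hsum, add_tsub_cancel_right, hfull, hB] at this
    nlinarith
  replace hv : #{x ∈ S | label x = v} = B + k + 1 := by omega
  have htwo : ∀ w ≠ v, 2 ≤ #{x ∈ S | label x = w} := by
    intro w hw
    have := sum_le_sum_add_card_compl_mul _ {v, w} fun u hu => hother u (by simp_all)
    rw [sum_pair (Ne.symm hw), card_pair (Ne.symm hw), hΛ, hsum, hv,
      show B + k + 1 + 1 - 2 = B + k by omega] at this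
    nlinarith
  obtain ⟨w, hw, hw2⟩ := hlt_two v hv
  exact absurd (htwo w hw) (by omega)

/-- Let `q > 2`, `k < √q − 1`, and let `S` be a set of at least `q² − kq` points of
`AG(2,q)` labeled with `q+1` labels satisfying the closure condition. If not all points
of `S` share a single label, then there are at least two distinct labels each occurring
at least `q − k` times among the points of `S`. -/
theorem stmt5 {F : Type*} [Field F] [Fintype F] (q k : ℕ)
    (hcard : Fintype.card F = q) (hq : 2 < q)
    (hk : (k : ℝ) < Real.sqrt q - 1)
    (S : Set (Fin 2 → F)) (label : (Fin 2 → F) → Fin (q + 1))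
    (hS : (q : ℤ) ^ 2 - k * q ≤ S.ncard)
    (hclosure : ClosureCond S label)
    (hnot : ¬ ∃ v, ∀ x ∈ S, label x = v) :
    ∃ v₁ v₂ : Fin (q + 1), v₁ ≠ v₂ ∧
      q - k ≤ {x ∈ S | label x = v₁}.ncard ∧
      q - k ≤ {x ∈ S | label x = v₂}.ncard := by
  classical
  subst hcard
  have hk' : (k + 1) ^ 2 < Fintype.card F := by
    exact_mod_cast (Real.lt_sqrt (by positivity)).mp (lt_sub_iff_add_lt.mp hk)
  have hS' : Fintype.card F ^ 2 ≤ #S.toFinset + k * Fintype.card F := by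
    rw [← Set.ncard_eq_toFinset_card']
    zify
    linarith
  have hclass : ∀ v, {x ∈ S | label x = v}.ncard = #{x ∈ S.toFinset | label x = v} := fun v => by
    rw [← Set.ncard_coe_finset]
    simp
  push Not at hnot
  obtain ⟨v₁, v₂, hne, h₁, h₂⟩ := (show ClosureCond (S.toFinset : Set (Fin 2 → F)) label by
    simpa using hclosure).exists_two_large_classes (by simp) hq hk' hS'
      fun v => by simpa using hnot v
  exact ⟨v₁, v₂, hne, hclass v₁ ▸ h₁, hclass v₂ ▸ h₂⟩
end

section
/- Let U be a unital in PG(2,q²) and let R ∈ U. If strictly more than q² − q lines through R each contain at least two points of a subset U₀ ⊆ U, then R belongs to every unital of PG(2,q²) containing U₀. -/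
/-!
If `R` were off a unital `U'`, count the `q³ + 1` points of `U'` along the `q² + 1` lines through
`R`: each is a tangent (one point) or a secant (`q + 1` points), so exactly `q² − q` of them are
secants. But every line through `R` with two points of `U₀ ⊆ U'` is a secant of `U'`, and there
are more than `q² − q` of those.
-/

open Module
open scoped LinearAlgebra.Projectivization

namespace Projectivization

variable {K V : Type*} [Field K] [AddCommGroup V] [Module K V]

lemma finrank_sup_submodule_of_ne {p r : ℙ K V} (h : p ≠ r) :
    finrank K ↥(p.submodule ⊔ r.submodule) = 2 := by
  rw [p.submodule_eq, r.submodule_eq, ← Submodule.span_union, Set.singleton_union,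
    ← Matrix.range_cons_cons_empty _ _ ![],
    finrank_span_eq_card (linearIndependent_pair_iff_ne.2 h), Fintype.card_fin]

lemma range_map_subtype (W : Submodule K V) :
    Set.range (map W.subtype W.injective_subtype) = {p | p.submodule ≤ W} := by
  ext p
  constructor
  · rintro ⟨x, rfl⟩
    induction x using ind with
    | h v hv => simp [map_mk, submodule_mk, Submodule.span_singleton_le_iff_mem]
  · intro hp
    refine ⟨mk K ⟨p.rep, hp (p.submodule_eq ▸ Submodule.mem_span_singleton_self _)⟩
      (by simpa using p.rep_nonzero), ?_⟩
    rw [map_mk]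
    exact p.mk_rep

lemma ncard_setOf_submodule_le [Finite K] {W : Submodule K V} (hW : finrank K W = 2) :
    {p : ℙ K V | p.submodule ≤ W}.ncard = Nat.card K + 1 := by
  rw [← range_map_subtype, Set.ncard_range_of_injective (map_injective _ _),
    card_of_finrank_two K W hW]

end Projectivization

lemma IsUnital.ncard_inter_linePts_eq_of_two_le {K : Type*} [Field K] {q : ℕ}
    {U : Set (PGPoint K)} (hU : IsUnital q U)
    {W : Submodule K (Fin 3 → K)} (hW : IsLine W) (h2 : 2 ≤ (U ∩ linePts W).ncard) :
    (U ∩ linePts W).ncard = q + 1 :=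
  (hU.2 W hW).resolve_left (by omega)

section Plane

variable {K : Type*} [Field K] [Fintype K]

noncomputable def linesThrough (R : PGPoint K) : Finset (Submodule K (Fin 3 → K)) :=
  (Set.toFinite {W | IsLine W ∧ R.submodule ≤ W}).toFinset

@[simp]
lemma mem_linesThrough {R : PGPoint K} {W : Submodule K (Fin 3 → K)} :
    W ∈ linesThrough R ↔ IsLine W ∧ R.submodule ≤ W :=
  Set.Finite.mem_toFinset _

lemma ncard_linePts {W : Submodule K (Fin 3 → K)} (hW : IsLine W) :
    (linePts W).ncard = Fintype.card K + 1 := by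
  rw [linePts, Projectivization.ncard_setOf_submodule_le hW, Nat.card_eq_fintype_card]

lemma sup_submodule_eq_of_mem_linePts {P R : PGPoint K} {W : Submodule K (Fin 3 → K)}
    (hPR : P ≠ R) (hW : W ∈ linesThrough R) (hP : P ∈ linePts W) :
    R.submodule ⊔ P.submodule = W := by
  rw [mem_linesThrough] at hW
  refine Submodule.eq_of_le_of_finrank_eq (sup_le hW.2 hP) ?_
  rw [Projectivization.finrank_sup_submodule_of_ne hPR.symm, ← hW.1]

lemma sum_ncard_inter_linePts_linesThrough {R : PGPoint K} {S : Set (PGPoint K)} (hRS : R ∉ S) :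
    ∑ W ∈ linesThrough R, (S ∩ linePts W).ncard = S.ncard := by
  classical
  let join : PGPoint K → Submodule K (Fin 3 → K) := fun P => R.submodule ⊔ P.submodule
  have hjoin : ((Set.toFinite S).toFinset : Set (PGPoint K)).MapsTo join (linesThrough R) :=
    fun P hP => mem_linesThrough.2
      ⟨Projectivization.finrank_sup_submodule_of_ne fun h => hRS (h ▸ by simpa using hP),
        le_sup_left⟩
  rw [Set.ncard_eq_toFinset_card S, Finset.card_eq_sum_card_fiberwise hjoin]
  refine Finset.sum_congr rfl fun W hW => ?_
  rw [Set.ncard_eq_toFinset_card _ (Set.toFinite _)]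
  congr 1
  ext P
  simp only [Set.Finite.mem_toFinset, Set.mem_inter_iff, Finset.mem_filter]
  refine and_congr_right fun hP => ⟨sup_submodule_eq_of_mem_linePts (fun h => hRS (h ▸ hP)) hW,
    fun h => h ▸ (le_sup_right : P.submodule ≤ join P)⟩

/-- Each of the `c² + c` points other than `R` lies on exactly one line through `R`, and each
of these lines carries `c` of them. -/
lemma card_linesThrough (R : PGPoint K) : (linesThrough R).card = Fintype.card K + 1 := by
  have hline : ∀ W ∈ linesThrough R, ({R}ᶜ ∩ linePts W).ncard = Fintype.card K := by
    intro W hW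
    rw [mem_linesThrough] at hW
    have hdiff := Set.ncard_sdiff_singleton_add_one (s := linePts W) hW.2
    have hline := ncard_linePts hW.1
    rw [Set.inter_comm, ← Set.sdiff_eq]
    omega
  have hsum := sum_ncard_inter_linePts_linesThrough (S := {R}ᶜ) (Set.notMem_compl_iff.2 rfl)
  rw [Finset.sum_congr rfl hline, Finset.sum_const, smul_eq_mul, Set.ncard_compl,
    Set.ncard_singleton, Projectivization.card_of_finrank K _ (finrank_fin_fun K),
    Nat.card_eq_fintype_card] at hsum
  have hK : 0 < Fintype.card K := Fintype.card_pos
  simp only [Finset.sum_range_succ, Finset.sum_range_zero] at hsum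
  refine Nat.eq_of_mul_eq_mul_right hK ?_
  rw [hsum]
  ring_nf
  omega

lemma IsUnital.ncard_secants_of_notMem {q : ℕ} (hcard : Fintype.card K = q ^ 2)
    {U : Set (PGPoint K)} (hU : IsUnital q U) {R : PGPoint K} (hR : R ∉ U) :
    {W : Submodule K (Fin 3 → K) | IsLine W ∧ R.submodule ≤ W ∧
      (U ∩ linePts W).ncard = q + 1}.ncard = q ^ 2 - q := by
  classical
  have hline : ∀ W ∈ linesThrough R,
      (U ∩ linePts W).ncard = 1 + q * if (U ∩ linePts W).ncard = q + 1 then 1 else 0 := by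
    intro W hW
    rcases hU.2 W (mem_linesThrough.1 hW).1 with h | h <;> simp [h, add_comm]
  have hsum := sum_ncard_inter_linePts_linesThrough hR
  rw [Finset.sum_congr rfl hline, Finset.sum_add_distrib, ← Finset.mul_sum, Finset.sum_boole,
    Finset.sum_const, smul_eq_mul, mul_one, Nat.cast_id, card_linesThrough, hcard, hU.1] at hsum
  have hq : 0 < q := by
    have := hcard ▸ (Fintype.one_lt_card : 1 < Fintype.card K)
    exact Nat.pos_of_ne_zero (by rintro rfl; simp at this)
  have hsecants :
      ((linesThrough R).filter fun W => (U ∩ linePts W).ncard = q + 1).card = q ^ 2 - q := by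
    refine Nat.eq_of_mul_eq_mul_left hq ?_
    rw [Nat.mul_sub, show q * q ^ 2 = q ^ 3 by ring, ← sq]
    omega
  rw [← hsecants, ← Set.ncard_coe_finset]
  congr 1
  ext W
  simp [and_assoc]

end Plane

theorem stmt13_general {K : Type*} [Field K] [Fintype K] (q : ℕ)
    (hcard : Fintype.card K = q ^ 2)
    (U₀ : Set (PGPoint K))
    (R : PGPoint K)
    (hlines : {W : Submodule K (Fin 3 → K) | IsLine W ∧ R.submodule ≤ W ∧
        2 ≤ (U₀ ∩ linePts W).ncard}.ncard > q ^ 2 - q) :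
    ∀ U' : Set (PGPoint K), IsUnital q U' → U₀ ⊆ U' → R ∈ U' := by
  intro U' hU' hU₀U'
  by_contra hR
  have hsecant : {W : Submodule K (Fin 3 → K) | IsLine W ∧ R.submodule ≤ W ∧
      2 ≤ (U₀ ∩ linePts W).ncard} ⊆ {W | IsLine W ∧ R.submodule ≤ W ∧
      (U' ∩ linePts W).ncard = q + 1} := by
    rintro W ⟨hW, hRW, h2⟩
    refine ⟨hW, hRW, hU'.ncard_inter_linePts_eq_of_two_le hW ?_⟩
    exact h2.trans (Set.ncard_le_ncard (Set.inter_subset_inter_left _ hU₀U'))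
  have hle := (Set.ncard_le_ncard hsecant).trans (hU'.ncard_secants_of_notMem hcard hR).le
  omega

/-- Let `U` be a unital in `PG(2,q²)`, `R ∈ U`, and `U₀ ⊆ U`. If strictly more than
`q² − q` lines through `R` each contain at least two points of `U₀`, then `R` belongs
to every unital of `PG(2,q²)` containing `U₀`. -/
theorem stmt13 {K : Type*} [Field K] [Fintype K] (q : ℕ)
    (hcard : Fintype.card K = q ^ 2)
    (U U₀ : Set (PGPoint K)) (hU : IsUnital q U) (hU₀ : U₀ ⊆ U)
    (R : PGPoint K) (hR : R ∈ U)
    (hlines : {W : Submodule K (Fin 3 → K) | IsLine W ∧ R.submodule ≤ W ∧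
        2 ≤ (U₀ ∩ linePts W).ncard}.ncard > q ^ 2 - q) :
    ∀ U' : Set (PGPoint K), IsUnital q U' → U₀ ⊆ U' → R ∈ U' :=
  stmt13_general q hcard U₀ R hlines
end
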